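/- Let $r \ge 1$ and $x \in \mathbb{Z}^2$, and let $\mu$ be any probability measure on $C_x(r)$, the exterior boundary of the disk $D_x(r)$. If $r \ge 2(|x|+1)$, then $\left|\sum_{y \in C_x(r)} \mu(y)\,\mathfrak{a}(y) - \mathfrak{a}'(r)\right| \le \left(\tfrac{5}{2\pi} + 2\lambda\right)\dfrac{|x|+1}{r}$, where $\mathfrak{a}'(r) = \tfrac{2}{\pi}\log r + \kappa$. -/

import Mathlib

/-- Nearest-neighbor adjacency in `ℤ²`. -/
def Adj (p q : ℤ × ℤ) : Prop := (p.1 - q.1).natAbs + (p.2 - q.2).natAbs = 1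

/-- Euclidean norm on `ℤ²`. -/
noncomputable def znorm (p : ℤ × ℤ) : ℝ := Real.sqrt ((p.1 : ℝ) ^ 2 + (p.2 : ℝ) ^ 2)

/-- Euclidean distance on `ℤ²`. -/
noncomputable def zdist (p q : ℤ × ℤ) : ℝ := znorm (p - q)

/-- `f` is (discretely) harmonic on `s ⊆ ℤ²`. -/
def HarmonicOn (f : ℤ × ℤ → ℝ) (s : Set (ℤ × ℤ)) : Prop :=
  ∀ p ∈ s, f p = (f (p + ((1 : ℤ), (0 : ℤ))) + f (p - ((1 : ℤ), (0 : ℤ)))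
    + f (p + ((0 : ℤ), (1 : ℤ))) + f (p - ((0 : ℤ), (1 : ℤ)))) / 4

/-! Along the boundary, `|y|` lies between `r - |x|` and `r + |x| + 1`, so the expansion of `𝔞`
reduces the claim to bounding `|log |y| - log r|`. Above `r` the bound `log t ≤ t - 1` suffices.
Below `r` the best estimate is the chord of `log` on `[1/2, 1]`, which gives `2 log 2 · |x| / r`;
since `4 log 2 > 5/2`, the difference has to be paid for by `λ` (for `x = (k,0)`,
`y = (-k-2,0)`, `r = 2k+2` it really is needed), and `λ` cannot be small: a combination of
mean-value identities of `𝔞` near the origin, compared with the expansion, forces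
`45 log 2 ≤ 208 π λ`. -/

open Real

def HasLogExpansion (a : ℤ × ℤ → ℝ) (κ lam : ℝ) : Prop :=
  ∀ z : ℤ × ℤ, z ≠ 0 → |a z - (2 / π) * log (znorm z) - κ| ≤ lam / (znorm z) ^ 2

def toComplex (p : ℤ × ℤ) : ℂ := ⟨p.1, p.2⟩

lemma toComplex_sub (p q : ℤ × ℤ) : toComplex (p - q) = toComplex p - toComplex q := by
  simp [toComplex, Complex.ext_iff]

lemma znorm_eq_norm_toComplex (p : ℤ × ℤ) : znorm p = ‖toComplex p‖ := by
  rw [znorm, toComplex, Complex.norm_def, Complex.normSq_mk]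
  ring_nf

lemma zdist_eq_norm_toComplex_sub (p q : ℤ × ℤ) : zdist p q = ‖toComplex p - toComplex q‖ := by
  rw [zdist, znorm_eq_norm_toComplex, toComplex_sub]

lemma znorm_mk (m k : ℤ) : znorm (m, k) = √((m : ℝ) ^ 2 + (k : ℝ) ^ 2) := rfl

lemma Adj.zdist_eq_one {p q : ℤ × ℤ} (h : Adj p q) : zdist p q = 1 := by
  unfold Adj at h
  have hcases : ((p.1 - q.1 = 1 ∨ p.1 - q.1 = -1) ∧ p.2 - q.2 = 0)
      ∨ (p.1 - q.1 = 0 ∧ (p.2 - q.2 = 1 ∨ p.2 - q.2 = -1)) := by omega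
  rcases hcases with ⟨h1 | h1, h2⟩ | ⟨h1, h2 | h2⟩ <;>
    simp [zdist, znorm, h1, h2]

lemma sub_znorm_le_znorm_of_le_zdist {x y : ℤ × ℤ} {r : ℝ} (h : r ≤ zdist y x) :
    r - znorm x ≤ znorm y := by
  rw [zdist_eq_norm_toComplex_sub] at h
  rw [znorm_eq_norm_toComplex, znorm_eq_norm_toComplex]
  linarith [norm_sub_le (toComplex y) (toComplex x)]

lemma znorm_le_add_of_adj {x y q : ℤ × ℤ} {r : ℝ} (hadj : Adj y q) (hq : zdist q x < r) :
    znorm y ≤ r + znorm x + 1 := by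
  have hyq := hadj.zdist_eq_one
  rw [zdist_eq_norm_toComplex_sub] at hq hyq
  rw [znorm_eq_norm_toComplex, znorm_eq_norm_toComplex]
  have hsplit : toComplex y = (toComplex y - toComplex q) + (toComplex q - toComplex x)
      + toComplex x := by ring
  rw [hsplit]
  linarith [norm_add₃_le (a := toComplex y - toComplex q) (b := toComplex q - toComplex x)
    (c := toComplex x)]

lemma neg_two_log_two_mul_le_log_one_sub {v : ℝ} (h0 : 0 ≤ v) (h1 : v ≤ 1 / 2) :
    -(2 * log 2 * v) ≤ log (1 - v) := by
  have hchord := strictConcaveOn_log_Ioi.concaveOn.2 (Set.mem_Ioi.2 one_pos)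
    (Set.mem_Ioi.2 one_half_pos) (by linarith : (0 : ℝ) ≤ 1 - 2 * v)
    (by linarith : (0 : ℝ) ≤ 2 * v) (by ring)
  have hpoint : (1 - 2 * v) • (1 : ℝ) + (2 * v) • (1 / 2 : ℝ) = 1 - v := by
    simp only [smul_eq_mul]; ring
  rw [hpoint, smul_eq_mul, smul_eq_mul, log_one, one_div, log_inv] at hchord
  linarith

lemma log_sub_log_le_of_le_add {r n s : ℝ} (hr : 0 < r) (hn : 0 < n) (h : n ≤ r + s) :
    log n - log r ≤ s / r := by
  rw [← log_div hn.ne' hr.ne']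
  calc log (n / r) ≤ n / r - 1 := log_le_sub_one_of_pos (div_pos hn hr)
    _ = (n - r) / r := by field_simp
    _ ≤ s / r := by gcongr; linarith

lemma log_sub_log_le_of_sub_le {r n t : ℝ} (hr : 0 < r) (ht : 0 ≤ t) (ht2 : 2 * t ≤ r)
    (h : r - t ≤ n) : log r - log n ≤ 2 * log 2 * (t / r) := by
  have hv : t / r ≤ 1 / 2 := by rw [div_le_iff₀ hr]; linarith
  have hpos : 0 < 1 - t / r := by linarith
  have hlow : log (r * (1 - t / r)) ≤ log n := by
    apply log_le_log (mul_pos hr hpos)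
    rw [mul_one_sub, mul_div_cancel₀ t hr.ne']
    exact h
  rw [log_mul hr.ne' hpos.ne'] at hlow
  linarith [neg_two_log_two_mul_le_log_one_sub (div_nonneg ht hr.le) hv]

section ErrorTerm

variable {r t n lam : ℝ}

lemma expansion_error_le_of_ge (ht : 0 ≤ t) (hr : 2 * (t + 1) ≤ r) (hlam : 0 ≤ lam)
    (hn : r ≤ n) (hn' : n ≤ r + t + 1) :
    lam / n ^ 2 + 2 / π * |log n - log r| ≤ (5 / (2 * π) + 2 * lam) * ((t + 1) / r) := by
  have hr0 : 0 < r := by linarith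
  have hlog : |log n - log r| ≤ (t + 1) / r := by
    rw [abs_of_nonneg (sub_nonneg.2 (log_le_log hr0 hn))]
    exact log_sub_log_le_of_le_add hr0 (by linarith) (by linarith)
  have hlam' : lam / n ^ 2 ≤ lam * ((t + 1) / r) := by
    calc lam / n ^ 2 ≤ lam / r ^ 2 := by gcongr
      _ = lam * (1 / r) * (1 / r) := by ring
      _ ≤ lam * ((t + 1) / r) * 1 := by
        gcongr
        · linarith
        · rw [div_le_one hr0]; linarith
      _ = lam * ((t + 1) / r) := mul_one _
  have hπ : 2 / π ≤ 5 / (2 * π) := by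
    rw [div_le_div_iff₀ pi_pos (by positivity)]; nlinarith [pi_pos]
  calc lam / n ^ 2 + 2 / π * |log n - log r|
      ≤ lam * ((t + 1) / r) + 5 / (2 * π) * ((t + 1) / r) := by gcongr
    _ ≤ (5 / (2 * π) + 2 * lam) * ((t + 1) / r) := by
        nlinarith [mul_nonneg hlam (by positivity : 0 ≤ (t + 1) / r)]

lemma expansion_error_le_of_le (ht : 0 ≤ t) (hr : 2 * (t + 1) ≤ r) (hlam : 0 ≤ lam)
    (hcert : 4 * log 2 ≤ 5 / 2 + 2 * π * lam) (hn : r - t ≤ n) (hn' : n ≤ r) :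
    lam / n ^ 2 + 2 / π * |log n - log r| ≤ (5 / (2 * π) + 2 * lam) * ((t + 1) / r) := by
  have hr0 : 0 < r := by linarith
  have hc : 4 * log 2 / π ≤ 5 / (2 * π) + 2 * lam := by
    rw [div_le_iff₀ pi_pos, add_mul, div_mul_eq_mul_div, mul_div_mul_right _ _ pi_pos.ne']
    linarith
  have hlog : |log n - log r| ≤ 2 * log 2 * (t / r) := by
    rw [abs_sub_comm, abs_of_nonneg (sub_nonneg.2 (log_le_log (by linarith) hn'))]
    exact log_sub_log_le_of_sub_le hr0 ht (by linarith) hn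
  have hlam' : lam / n ^ 2 ≤ 2 * lam * (1 / r) := by
    calc lam / n ^ 2 ≤ lam / (r / 2) ^ 2 := by gcongr; linarith
      _ = 2 * lam * (1 / r) * (2 / r) := by ring
      _ ≤ 2 * lam * (1 / r) * 1 := by gcongr; rw [div_le_one hr0]; linarith
      _ = 2 * lam * (1 / r) := mul_one _
  calc lam / n ^ 2 + 2 / π * |log n - log r|
      ≤ 2 * lam * (1 / r) + 4 * log 2 / π * (t / r) := by
        grw [hlam', hlog]
        exact le_of_eq (by ring)
    _ ≤ (5 / (2 * π) + 2 * lam) * (1 / r) + (5 / (2 * π) + 2 * lam) * (t / r) := by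
        gcongr
        linarith [show 0 ≤ 5 / (2 * π) by positivity]
    _ = (5 / (2 * π) + 2 * lam) * ((t + 1) / r) := by ring

lemma expansion_error_le (ht : 0 ≤ t) (hr : 2 * (t + 1) ≤ r) (hlam : 0 ≤ lam)
    (hcert : 4 * log 2 ≤ 5 / 2 + 2 * π * lam) (hn : r - t ≤ n) (hn' : n ≤ r + t + 1) :
    lam / n ^ 2 + 2 / π * |log n - log r| ≤ (5 / (2 * π) + 2 * lam) * ((t + 1) / r) := by
  rcases le_total r n with hrn | hnr
  · exact expansion_error_le_of_ge ht hr hlam hrn hn'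
  · exact expansion_error_le_of_le ht hr hlam hcert hn hnr

end ErrorTerm

/-- Adding the mean-value identities at `(2,0)` and `(0,2)` and subtracting four times the one at
`(1,1)` eliminates the values at `(1,0), (0,1), (2,1), (1,2)`. -/
lemma HarmonicOn.mean_value_combination {f : ℤ × ℤ → ℝ} (hf : HarmonicOn f {z | z ≠ 0}) :
    4 * f (2, 0) + 4 * f (0, 2) - 4 * f (1, 1)
      = f (3, 0) + f (0, 3) + f (2, -1) + f (-1, 2) := by
  have h11 := hf (1, 1) (by decide)
  have h20 := hf (2, 0) (by decide)
  have h02 := hf (0, 2) (by decide)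
  norm_num at h11 h20 h02
  linarith

lemma HasLogExpansion.abs_sub_le_of_sq_add_sq {a : ℤ × ℤ → ℝ} {κ lam : ℝ}
    (ha : HasLogExpansion a κ lam) {m k : ℤ} {s : ℝ} (hs : (m : ℝ) ^ 2 + (k : ℝ) ^ 2 = s)
    (hz : ((m, k) : ℤ × ℤ) ≠ 0) : |a (m, k) - log s / π - κ| ≤ lam / s := by
  have h := ha (m, k) hz
  have hs0 : 0 ≤ s := hs ▸ by positivity
  rw [znorm_mk, hs, sq_sqrt hs0, log_sqrt hs0] at h
  convert h using 4
  field_simp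

lemma HasLogExpansion.log_two_le {a : ℤ × ℤ → ℝ} {κ lam : ℝ} (ha : HasLogExpansion a κ lam)
    (harm : HarmonicOn a {z | z ≠ 0}) : 45 * log 2 ≤ 208 * (π * lam) := by
  have e11 := ha.abs_sub_le_of_sq_add_sq (m := 1) (k := 1) (s := 2) (by norm_num) (by decide)
  have e20 := ha.abs_sub_le_of_sq_add_sq (m := 2) (k := 0) (s := 4) (by norm_num) (by decide)
  have e02 := ha.abs_sub_le_of_sq_add_sq (m := 0) (k := 2) (s := 4) (by norm_num) (by decide)
  have e30 := ha.abs_sub_le_of_sq_add_sq (m := 3) (k := 0) (s := 9) (by norm_num) (by decide)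
  have e03 := ha.abs_sub_le_of_sq_add_sq (m := 0) (k := 3) (s := 9) (by norm_num) (by decide)
  have e21 := ha.abs_sub_le_of_sq_add_sq (m := 2) (k := -1) (s := 5) (by norm_num) (by decide)
  have e12 := ha.abs_sub_le_of_sq_add_sq (m := -1) (k := 2) (s := 5) (by norm_num) (by decide)
  have hcomb := harm.mean_value_combination
  have hlog : log 2 ≤ 8 * log 4 - 4 * log 2 - 2 * log 9 - 2 * log 5 := by
    have h := log_le_log (by norm_num) (by norm_num : (2 : ℝ) ^ 5 * 9 ^ 2 * 5 ^ 2 ≤ 4 ^ 8)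
    rw [log_mul (by norm_num) (by norm_num), log_mul (by norm_num) (by norm_num), log_pow,
      log_pow, log_pow, log_pow] at h
    push_cast at h
    linarith
  have key : (8 * log 4 - 4 * log 2 - 2 * log 9 - 2 * log 5) / π ≤ 208 / 45 * lam := by
    simp only [sub_div, mul_div_assoc]
    rw [abs_le] at e11 e20 e02 e30 e03 e21 e12
    linarith
  rw [div_le_iff₀ pi_pos] at key
  linarith


lemma HasLogExpansion.abs_sub_le {a : ℤ × ℤ → ℝ} {κ lam : ℝ} (ha : HasLogExpansion a κ lam)
    {y : ℤ × ℤ} (hy : y ≠ 0) (r : ℝ) :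
    |a y - (2 / π * log r + κ)| ≤ lam / znorm y ^ 2 + 2 / π * |log (znorm y) - log r| := by
  calc |a y - (2 / π * log r + κ)|
      = |(a y - 2 / π * log (znorm y) - κ) + 2 / π * (log (znorm y) - log r)| := by ring_nf
    _ ≤ |a y - 2 / π * log (znorm y) - κ| + 2 / π * |log (znorm y) - log r| := by
        grw [abs_add_le, abs_mul, abs_of_pos (by positivity : (0 : ℝ) < 2 / π)]
    _ ≤ lam / znorm y ^ 2 + 2 / π * |log (znorm y) - log r| := by grw [ha y hy]

lemma HasLogExpansion.abs_sub_le_of_boundary {a : ℤ × ℤ → ℝ} {κ lam : ℝ}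
    (ha : HasLogExpansion a κ lam) (harm : HarmonicOn a {z | z ≠ 0}) (hlam : 0 ≤ lam)
    {x y q : ℤ × ℤ} {r : ℝ} (hr : 2 * (znorm x + 1) ≤ r) (hy : ¬ zdist y x < r)
    (hadj : Adj y q) (hq : zdist q x < r) :
    |a y - (2 / π * log r + κ)| ≤ (5 / (2 * π) + 2 * lam) * ((znorm x + 1) / r) := by
  have hlow := sub_znorm_le_znorm_of_le_zdist (not_lt.1 hy)
  have hup := znorm_le_add_of_adj hadj hq
  have hx : 0 ≤ znorm x := Real.sqrt_nonneg _
  have hy0 : y ≠ 0 := by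
    have hpos : 0 < znorm y := by linarith
    rintro rfl
    simp [znorm] at hpos
  have hcert : 4 * log 2 ≤ 5 / 2 + 2 * π * lam := by
    linarith [ha.log_two_le harm, log_two_lt_d9]
  exact (ha.abs_sub_le hy0 r).trans (expansion_error_le hx hr hlam hcert hlow hup)

lemma abs_sum_mul_sub_le {ι : Type*} {s : Finset ι} {w f : ι → ℝ} {c B : ℝ}
    (hw0 : ∀ i ∈ s, 0 ≤ w i) (hw1 : ∑ i ∈ s, w i = 1) (hf : ∀ i ∈ s, |f i - c| ≤ B) :
    |∑ i ∈ s, w i * f i - c| ≤ B := by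
  have hsub : ∑ i ∈ s, w i * f i - c = ∑ i ∈ s, w i * (f i - c) := by
    simp only [mul_sub, Finset.sum_sub_distrib, ← Finset.sum_mul, hw1, one_mul]
  calc |∑ i ∈ s, w i * f i - c| ≤ ∑ i ∈ s, |w i * (f i - c)| :=
        hsub ▸ Finset.abs_sum_le_sum_abs _ _
    _ ≤ ∑ i ∈ s, w i * B := Finset.sum_le_sum fun i hi => by
        rw [abs_mul, abs_of_nonneg (hw0 i hi)]
        exact mul_le_mul_of_nonneg_left (hf i hi) (hw0 i hi)
    _ = B := by rw [← Finset.sum_mul, hw1, one_mul]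

theorem stmt14_general (a : ℤ × ℤ → ℝ) (κ lam : ℝ)
    (hlam0 : 0 ≤ lam)
    (haharm : HarmonicOn a {z | z ≠ 0})
    (haexp : ∀ z : ℤ × ℤ, z ≠ 0 →
      |a z - (2 / Real.pi) * Real.log (znorm z) - κ| ≤ lam / (znorm z) ^ 2)
    (x : ℤ × ℤ) (r : ℝ) (hr : 2 * (znorm x + 1) ≤ r)
    (F : Finset (ℤ × ℤ))
    (hF : ∀ y ∈ F, ¬ zdist y x < r ∧ ∃ q : ℤ × ℤ, Adj y q ∧ zdist q x < r)
    (w : ℤ × ℤ → ℝ) (hw0 : ∀ y ∈ F, 0 ≤ w y) (hw1 : (∑ y ∈ F, w y) = 1) :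
    |(∑ y ∈ F, w y * a y) - ((2 / Real.pi) * Real.log r + κ)|
      ≤ (5 / (2 * Real.pi) + 2 * lam) * ((znorm x + 1) / r) := by
  refine abs_sum_mul_sub_le hw0 hw1 fun y hy => ?_
  obtain ⟨hfar, q, hadj, hnear⟩ := hF y hy
  exact HasLogExpansion.abs_sub_le_of_boundary haexp haharm hlam0 hr hfar hadj hnear

/-- Lemma A.2: for the potential kernel `𝔞` of simple random walk on `ℤ²` and any
probability measure `w` on `C_x(r)` (the exterior boundary of the disk `D_x(r)`),
if `r ≥ 2(|x|+1)` then `|∑_y w(y) 𝔞(y) - 𝔞'(r)| ≤ (5/(2π) + 2λ)(|x|+1)/r`, where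
`𝔞'(r) = (2/π) log r + κ`. -/
theorem stmt14 (a : ℤ × ℤ → ℝ) (κ lam : ℝ)
    (hlam0 : 0 ≤ lam) (hlam : lam ≤ 0.07)
    (ha0 : a 0 = 0) (haharm : HarmonicOn a {z | z ≠ 0})
    (haexp : ∀ z : ℤ × ℤ, z ≠ 0 →
      |a z - (2 / Real.pi) * Real.log (znorm z) - κ| ≤ lam / (znorm z) ^ 2)
    (x : ℤ × ℤ) (r : ℝ) (hr1 : 1 ≤ r) (hr : 2 * (znorm x + 1) ≤ r)
    (F : Finset (ℤ × ℤ))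
    (hF : ∀ y ∈ F, ¬ zdist y x < r ∧ ∃ q : ℤ × ℤ, Adj y q ∧ zdist q x < r)
    (w : ℤ × ℤ → ℝ) (hw0 : ∀ y ∈ F, 0 ≤ w y) (hw1 : (∑ y ∈ F, w y) = 1) :
    |(∑ y ∈ F, w y * a y) - ((2 / Real.pi) * Real.log r + κ)|
      ≤ (5 / (2 * Real.pi) + 2 * lam) * ((znorm x + 1) / r) :=
  stmt14_general a κ lam hlam0 haharm haexp x r hr F hF w hw0 hw1
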